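/- arXiv:2205.08032 — 5 statements merged into one kernel-verified Lean document; each statement's English description precedes it below -/
import Mathlib

section
/- Let A₀ ∈ {-1,0,1}^{m₀×n₀} be a matrix such that A₀x = 0 has no nontrivial solution with x ∈ {-1,0,1}^{n₀}. Define the block matrix A = [[A₀, A₀, I_{m₀}], [A₀, -A₀, 0]] of size 2m₀ × (2n₀ + m₀). Then Ax = 0 has no nontrivial solution with x ∈ {-1,0,1}^{2n₀+m₀}. -/
/-- Block construction of an EQ matrix: if `A₀x = 0` has no nontrivial solution with
entries in `{-1,0,1}`, then the same holds for `[[A₀, A₀, I], [A₀, -A₀, 0]]`. -/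
theorem stmt_0 (m₀ n₀ : ℕ) (A₀ : Matrix (Fin m₀) (Fin n₀) ℤ)
    (hA₀ : ∀ i j, A₀ i j ∈ ({-1, 0, 1} : Set ℤ))
    (hEQ : ∀ x : Fin n₀ → ℤ, (∀ j, x j ∈ ({-1, 0, 1} : Set ℤ)) →
      A₀.mulVec x = 0 → x = 0)
    (A : Matrix (Fin m₀ ⊕ Fin m₀) ((Fin n₀ ⊕ Fin n₀) ⊕ Fin m₀) ℤ)
    (hA : A = Matrix.fromBlocks
      (Matrix.of fun i j => Sum.elim (A₀ i) (A₀ i) j) (1 : Matrix (Fin m₀) (Fin m₀) ℤ)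
      (Matrix.of fun i j => Sum.elim (A₀ i) (-(A₀ i)) j) (0 : Matrix (Fin m₀) (Fin m₀) ℤ)) :
    ∀ x : (Fin n₀ ⊕ Fin n₀) ⊕ Fin m₀ → ℤ, (∀ j, x j ∈ ({-1, 0, 1} : Set ℤ)) →
      A.mulVec x = 0 → x = 0 := by
  subst hA
  intro x hx h0
  set u : Fin n₀ → ℤ := fun j => x (Sum.inl (Sum.inl j)) with hu
  set v : Fin n₀ → ℤ := fun j => x (Sum.inl (Sum.inr j)) with hv
  set w : Fin m₀ → ℤ := fun i => x (Sum.inr i) with hw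
  have hx' : x = Sum.elim (Sum.elim u v) w := by
    funext j; rcases j with (j | j) | i <;> rfl
  rw [hx'] at h0
  -- identify the blocks as fromColumns
  have hB : (Matrix.of fun i j => Sum.elim (A₀ i) (A₀ i) j) = Matrix.fromCols A₀ A₀ := rfl
  have hC : (Matrix.of fun i j => Sum.elim (A₀ i) (-(A₀ i)) j) =
      Matrix.fromCols A₀ (-A₀) := rfl
  rw [hB, hC, Matrix.fromBlocks_mulVec] at h0
  have h1 : A₀.mulVec u + A₀.mulVec v + w = 0 := by
    have := congrFun h0
    funext i
    have hi := this (Sum.inl i)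
    simpa [Matrix.fromCols_mulVec_sumElim, Matrix.one_mulVec] using hi
  have h2 : A₀.mulVec u - A₀.mulVec v = 0 := by
    have := congrFun h0
    funext i
    have hi := this (Sum.inr i)
    simpa [Matrix.fromCols_mulVec_sumElim, Matrix.neg_mulVec, sub_eq_add_neg] using hi
  have heq : A₀.mulVec u = A₀.mulVec v := sub_eq_zero.mp h2
  have hkey : ∀ i, 2 * (A₀.mulVec u) i + w i = 0 := by
    intro i
    have := congrFun h1 i
    have hv' := congrFun heq i
    simp only [Pi.add_apply, Pi.zero_apply] at this
    linarith
  have hw0 : ∀ i, w i = 0 ∧ (A₀.mulVec u) i = 0 := by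
    intro i
    have hmem : w i = -1 ∨ w i = 0 ∨ w i = 1 := hx (Sum.inr i)
    have := hkey i
    omega
  have hAu : A₀.mulVec u = 0 := funext fun i => (hw0 i).2
  have hu0 : u = 0 := hEQ u (fun j => hx (Sum.inl (Sum.inl j))) hAu
  have hv0 : v = 0 := hEQ v (fun j => hx (Sum.inl (Sum.inr j))) (heq ▸ hAu)
  rw [hx', hu0, hv0]
  funext j
  rcases j with (j | j) | i
  · rfl
  · rfl
  · exact (hw0 i).1
end

section
/- Let q ≥ 2 be an integer and let A₀ ∈ {-1,0,1}^{m₀×n₀} be a matrix such that A₀x = 0 has no nontrivial solution with x ∈ {-(q-1),...,q-1}^{n₀}. Define A to be the block matrix with first row block [A₀, A₀, ..., A₀, I_{m₀}] (q copies of A₀ followed by the identity) and subsequent row blocks [A₀, -A₀, 0,...,0], [0, A₀, -A₀, 0,...,0], ..., [0,...,0, A₀, -A₀, 0] of total size q·m₀ × (q·n₀ + m₀). Then Ax = 0 has no nontrivial solution with x ∈ {-(q-1),...,q-1}^{q·n₀+m₀}. -/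
/-- `q`-ary block construction of an `EQ_q` matrix: the first row block is
`q` copies of `A₀` followed by `I`, and row block `b ≥ 1` has `A₀` in column block `b-1`,
`-A₀` in column block `b`, and zeros elsewhere. If `A₀x = 0` has no nontrivial solution
with `|x j| ≤ q - 1`, then neither does `Ax = 0`. -/
theorem stmt_2 (q m₀ n₀ : ℕ) (hq : 2 ≤ q)
    (A₀ : Matrix (Fin m₀) (Fin n₀) ℤ)
    (hA₀ : ∀ i j, A₀ i j ∈ ({-1, 0, 1} : Set ℤ))
    (hEQ : ∀ x : Fin n₀ → ℤ, (∀ j, |x j| ≤ (q : ℤ) - 1) →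
      A₀.mulVec x = 0 → x = 0)
    (A : Matrix (Fin q × Fin m₀) ((Fin q × Fin n₀) ⊕ Fin m₀) ℤ)
    (hA : ∀ (i : Fin q × Fin m₀) (j : (Fin q × Fin n₀) ⊕ Fin m₀),
      A i j = Sum.elim
        (fun p : Fin q × Fin n₀ =>
          if (i.1 : ℕ) = 0 then A₀ i.2 p.2
          else if (p.1 : ℕ) = (i.1 : ℕ) - 1 then A₀ i.2 p.2
          else if (p.1 : ℕ) = (i.1 : ℕ) then -(A₀ i.2 p.2)
          else 0)
        (fun t : Fin m₀ =>
          if (i.1 : ℕ) = 0 then (if i.2 = t then 1 else 0) else 0) j) :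
    ∀ x : (Fin q × Fin n₀) ⊕ Fin m₀ → ℤ, (∀ j, |x j| ≤ (q : ℤ) - 1) →
      A.mulVec x = 0 → x = 0 := by
  intro x hx hAx
  have hq0 : 0 < q := by omega
  set y : Fin q → Fin n₀ → ℤ := fun b j => x (Sum.inl (b, j)) with hy
  set z : Fin m₀ → ℤ := fun t => x (Sum.inr t) with hz
  set v : Fin q → Fin m₀ → ℤ := fun b => A₀.mulVec (y b) with hv
  have hrow : ∀ (b : Fin q) (i : Fin m₀),
      (∑ p : Fin q × Fin n₀, A (b, i) (Sum.inl p) * y p.1 p.2)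
        + (∑ t : Fin m₀, A (b, i) (Sum.inr t) * z t) = 0 := by
    intro b i
    have h := congrFun hAx (b, i)
    rw [Matrix.mulVec, dotProduct] at h
    rw [Fintype.sum_sum_type] at h
    simpa using h
  -- first row block
  have claim1 : ∀ i, (∑ b, v b i) + z i = 0 := by
    intro i
    have h := hrow ⟨0, hq0⟩ i
    simp only [hA, Sum.elim_inl, Sum.elim_inr] at h
    rw [Fintype.sum_prod_type] at h
    simpa [hv, Matrix.mulVec, dotProduct, Finset.mul_sum, ite_mul,
      Finset.sum_ite_eq] using h
  -- later row blocks
  have claim2 : ∀ (b : Fin q) (hb : (b : ℕ) ≠ 0),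
      v ⟨(b : ℕ) - 1, by omega⟩ = v b := by
    intro b hb
    funext i
    have h := hrow b i
    simp only [hA, Sum.elim_inl, Sum.elim_inr, if_neg hb] at h
    rw [Fintype.sum_prod_type] at h
    set b₁ : Fin q := ⟨(b : ℕ) - 1, by omega⟩ with hb₁
    have hne : b₁ ≠ b := by
      intro hcon
      have := congrArg Fin.val hcon
      simp only [hb₁] at this
      omega
    have hre : (∑ b' : Fin q, ∑ j : Fin n₀,
        (if (b' : ℕ) = (b : ℕ) - 1 then A₀ i j
          else if (b' : ℕ) = (b : ℕ) then -(A₀ i j) else 0) * y b' j)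
        = ∑ b' : Fin q, ((if b' = b₁ then v b' i else 0)
            + (if b' = b then -(v b' i) else 0)) := by
      refine Finset.sum_congr rfl fun b' _ => ?_
      by_cases h1 : b' = b₁
      · have hv1 : (b' : ℕ) = (b : ℕ) - 1 := by rw [h1]
        have hv2 : b' ≠ b := h1 ▸ hne
        simp only [if_pos hv1, if_pos h1, if_neg hv2, add_zero]
        simp [hv, Matrix.mulVec, dotProduct]
      · have h1' : (b' : ℕ) ≠ (b : ℕ) - 1 := fun h => h1 (Fin.ext h)
        by_cases h2 : b' = b
        · have hv2 : (b' : ℕ) = (b : ℕ) := by rw [h2]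
          simp only [if_neg h1', if_pos hv2, if_neg h1, if_pos h2,
            neg_mul, zero_add, Finset.sum_neg_distrib]
          simp [hv, Matrix.mulVec, dotProduct]
        · have h2' : (b' : ℕ) ≠ (b : ℕ) := fun h => h2 (Fin.ext h)
          simp [h1', h2', h1, h2]
    rw [hre] at h
    rw [Finset.sum_add_distrib, Finset.sum_ite_eq', Finset.sum_ite_eq'] at h
    simp only [Finset.mem_univ, if_true, zero_mul, Finset.sum_const_zero,
      add_zero] at h
    linarith
  -- all v b equal v 0
  have claim3 : ∀ (n : ℕ) (hn : n < q), v ⟨n, hn⟩ = v ⟨0, hq0⟩ := by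
    intro n
    induction n with
    | zero => intro hn; rfl
    | succ k ih =>
      intro hn
      have h2 := claim2 ⟨k + 1, hn⟩ (by simp)
      have : v ⟨k, by omega⟩ = v ⟨k + 1, hn⟩ := by
        convert h2 using 2
        simp
      rw [← this, ih (by omega)]
  have claim3' : ∀ b : Fin q, v b = v ⟨0, hq0⟩ := fun b => by
    have := claim3 b b.isLt
    simpa using this
  -- q * v0 i + z i = 0
  have hv0 : ∀ i, v ⟨0, hq0⟩ i = 0 ∧ z i = 0 := by
    intro i
    have h := claim1 i
    have hs : (∑ b : Fin q, v b i) = (q : ℤ) * v ⟨0, hq0⟩ i := by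
      rw [Finset.sum_congr rfl fun b _ => by rw [claim3' b]]
      simp [Finset.sum_const, mul_comm]
    rw [hs] at h
    have hzb := hx (Sum.inr i)
    have habs : |z i| ≤ (q : ℤ) - 1 := hzb
    have hv0i : v ⟨0, hq0⟩ i = 0 := by
      by_contra hne
      have h1 : 1 ≤ |v ⟨0, hq0⟩ i| := by
        rcases lt_or_gt_of_ne hne with h' | h'
        · rw [abs_of_neg h']; omega
        · rw [abs_of_pos h']; omega
      have h2 : (q : ℤ) ≤ (q : ℤ) * |v ⟨0, hq0⟩ i| := by
        nlinarith [Int.natCast_pos.mpr hq0]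
      have h3 : |z i| = (q : ℤ) * |v ⟨0, hq0⟩ i| := by
        have hzi : z i = -((q : ℤ) * v ⟨0, hq0⟩ i) := by linarith
        rw [hzi, abs_neg, abs_mul,
          abs_of_nonneg (by positivity : (0:ℤ) ≤ (q:ℤ))]
      linarith
    constructor
    · exact hv0i
    · rw [hv0i] at h; linarith
  have hvz : v ⟨0, hq0⟩ = 0 := funext fun i => (hv0 i).1
  -- each y b is zero
  have hyz : ∀ b, y b = 0 := by
    intro b
    apply hEQ
    · intro j; exact hx (Sum.inl (b, j))
    · rw [show A₀.mulVec (y b) = v b from rfl, claim3' b, hvz]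
  funext j
  cases j with
  | inl p => simpa using congrFun (hyz p.1) p.2
  | inr t => exact (hv0 t).2
end

section
/- Let q ≥ 2 and let A ∈ ℤ^{rm×n} be a matrix, all of whose entries lie in a finite set Q = {q₁,...,q_k} of k distinct integers, such that every m×n submatrix obtained by selecting m rows of A is an EQ_q matrix. If n > k, then r ≤ k^{k+1}. -/
/-- MDS rate bound for `RMDS_q` matrices over a `k`-letter alphabet: if every choice of
`m` rows of `A ∈ ℤ^{rm×n}` forms an `EQ_q` matrix and `n > k`, then `r ≤ k^(k+1)`. -/
theorem stmt_7 (q r m n k : ℕ) (hq : 2 ≤ q) (hnk : k < n)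
    (Q : Finset ℤ) (hQ : Q.card = k)
    (A : Matrix (Fin (r * m)) (Fin n) ℤ)
    (hAQ : ∀ i j, A i j ∈ Q)
    (hRMDS : ∀ s : Fin m → Fin (r * m), Function.Injective s →
      ∀ x : Fin n → ℤ, (∀ j, |x j| ≤ (q : ℤ) - 1) →
        (∀ i, ∑ j, A (s i) j * x j = 0) → x = 0) :
    r ≤ k ^ (k + 1) := by
  classical
  rcases Nat.eq_zero_or_pos m with hm | hm
  · exfalso
    have h0 : (0 : ℕ) < n := lt_of_le_of_lt (Nat.zero_le k) hnk
    subst hm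
    have hx := hRMDS (fun i => i.elim0) (fun a => a.elim0)
      (fun j => if j = ⟨0, h0⟩ then 1 else 0)
      (by intro j; split <;> simp <;> omega)
      (fun i => i.elim0)
    have h1 : (fun j : Fin n => if j = (⟨0, h0⟩ : Fin n) then (1 : ℤ) else 0)
        ⟨0, h0⟩ = 0 := by rw [hx]; rfl
    simp at h1
  · have hkn : k + 1 ≤ n := hnk
    set ι : Fin (k + 1) → Fin n := Fin.castLE hkn with hι
    have hιinj : Function.Injective ι := Fin.castLE_injective hkn
    set π : Fin (r * m) → (Fin (k + 1) → Q) :=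
      fun i t => ⟨A i (ι t), hAQ i (ι t)⟩ with hπ
    have hfiber : ∀ p ∈ Finset.univ.image π,
        (Finset.univ.filter fun i => π i = p).card ≤ m := by
      intro p _
      by_contra hlt
      push_neg at hlt
      obtain ⟨u, hu_sub, hu_card⟩ := Finset.exists_subset_card_eq hlt.le
      set s : Fin m → Fin (r * m) := fun i => u.orderEmbOfFin hu_card i with hs
      have hs_inj : Function.Injective s := (u.orderEmbOfFin hu_card).injective
      have hs_mem : ∀ i, π (s i) = p := by
        intro i
        have := hu_sub (Finset.orderEmbOfFin_mem u hu_card i)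
        exact (Finset.mem_filter.mp this).2
      have hs_val : ∀ i t, A (s i) (ι t) = (p t : ℤ) := by
        intro i t
        have := congrFun (hs_mem i) t
        exact congrArg Subtype.val this
      obtain ⟨j₁, j₂, hne, heq⟩ := Fintype.exists_ne_map_eq_of_card_lt p
        (by simp [Fintype.card_coe, hQ])
      set x : Fin n → ℤ :=
        fun j => (if j = ι j₁ then (1 : ℤ) else 0) - (if j = ι j₂ then 1 else 0) with hxdef
      have hxb : ∀ j, |x j| ≤ (q : ℤ) - 1 := by
        intro j
        have : (1 : ℤ) ≤ (q : ℤ) - 1 := by omega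
        simp only [hxdef]
        split <;> split <;> simp <;> omega
      have hker : ∀ i, ∑ j, A (s i) j * x j = 0 := by
        intro i
        have : ∑ j, A (s i) j * x j = A (s i) (ι j₁) - A (s i) (ι j₂) := by
          simp [hxdef, mul_sub, Finset.sum_sub_distrib, mul_ite, mul_one, mul_zero,
            Finset.sum_ite_eq']
        rw [this, hs_val i j₁, hs_val i j₂]
        rw [heq]
        ring
      have hx0 := hRMDS s hs_inj x hxb hker
      have h1 : x (ι j₁) = 0 := by rw [hx0]; rfl
      have h2 : ι j₁ ≠ ι j₂ := fun h => hne (hιinj h)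
      simp [hxdef, h2] at h1
    have hcard : (Finset.univ : Finset (Fin (r * m))).card ≤
        m * (Finset.univ.image π).card :=
      Finset.card_le_mul_card_image Finset.univ m hfiber
    have himg : (Finset.univ.image π).card ≤ k ^ (k + 1) := by
      have := Finset.card_le_univ (Finset.univ.image π)
      simpa [Fintype.card_coe, hQ] using this
    have hmain : r * m ≤ m * k ^ (k + 1) := by
      rw [Finset.card_univ, Fintype.card_fin] at hcard
      calc r * m ≤ m * (Finset.univ.image π).card := hcard
        _ ≤ m * k ^ (k + 1) := Nat.mul_le_mul_left m himg
    have : m * r ≤ m * k ^ (k + 1) := by rw [mul_comm] at hmain; exact hmain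
    exact Nat.le_of_mul_le_mul_left this hm
end

section
/- Let W ≥ 1 and q ≥ 2 be integers, let a = (a₁,...,a_n) be uniformly distributed on {-W,...,W}^n with independent coordinates, and let x ∈ (ℤ \ {0})^n be a fixed vector with 1 ≤ |x_i| ≤ q-1 for all i. Then there is a constant C depending only on q such that Pr(Σᵢ aᵢxᵢ = 0) ≤ C/(√n · W). -/
open Real Finset intervalIntegral MeasureTheory

/-- The Dirichlet-type kernel `∑_{k=-W}^{W} e^{2πikt}`. -/
noncomputable def Dker (W : ℕ) (t : ℝ) : ℂ :=
  ∑ k ∈ Finset.Icc (-(W : ℤ)) W, Complex.exp (((2 * π * k * t : ℝ) : ℂ) * Complex.I)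

lemma continuous_Dker (W : ℕ) : Continuous (Dker W) := by
  refine continuous_finset_sum _ (fun k _ => ?_)
  exact Complex.continuous_exp.comp
    ((Complex.continuous_ofReal.comp (by continuity)).mul continuous_const)

lemma card_IccZ (W : ℕ) : (Finset.Icc (-(W : ℤ)) W).card = 2 * W + 1 := by
  rw [Int.card_Icc]; omega

lemma norm_Dker_le (W : ℕ) (t : ℝ) : ‖Dker W t‖ ≤ 2 * W + 1 := by
  calc ‖Dker W t‖ ≤ ∑ k ∈ Finset.Icc (-(W : ℤ)) W,
      ‖Complex.exp (((2 * π * k * t : ℝ) : ℂ) * Complex.I)‖ := norm_sum_le _ _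
    _ = ∑ k ∈ Finset.Icc (-(W : ℤ)) W, 1 := by
        refine Finset.sum_congr rfl fun k _ => ?_
        exact Complex.norm_exp_ofReal_mul_I _
    _ = 2 * W + 1 := by rw [Finset.sum_const, card_IccZ]; push_cast; ring

lemma Dker_conj (W : ℕ) (t : ℝ) : (starRingEnd ℂ) (Dker W t) = Dker W t := by
  unfold Dker
  rw [map_sum]
  refine Finset.sum_nbij' (fun k => -k) (fun k => -k) ?_ ?_ (by simp) (by simp) ?_
  · intro k hk; simp only [Finset.mem_Icc] at *; omega
  · intro k hk; simp only [Finset.mem_Icc] at *; omega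
  · intro k hk
    rw [← Complex.exp_conj]
    congr 1
    simp only [map_mul, Complex.conj_I, Complex.conj_ofReal]
    push_cast
    ring

lemma Dker_eq_re (W : ℕ) (t : ℝ) : Dker W t = ((Dker W t).re : ℂ) :=
  (Complex.conj_eq_iff_re.mp (Dker_conj W t)).symm

lemma Dker_re (W : ℕ) (t : ℝ) :
    (Dker W t).re = ∑ k ∈ Finset.Icc (-(W : ℤ)) W, Real.cos (2 * π * k * t) := by
  unfold Dker
  rw [Complex.re_sum]
  exact Finset.sum_congr rfl fun k _ => Complex.exp_ofReal_mul_I_re _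

lemma norm_Dker_eq_abs_re (W : ℕ) (t : ℝ) : ‖Dker W t‖ = |(Dker W t).re| := by
  conv_lhs => rw [Dker_eq_re]
  exact Complex.norm_real _




lemma Dker_periodic (W : ℕ) : Function.Periodic (Dker W) 1 := by
  intro t
  unfold Dker
  refine Finset.sum_congr rfl fun k _ => ?_
  have : ((2 * π * k * (t + 1) : ℝ) : ℂ) * Complex.I
      = ((2 * π * k * t : ℝ) : ℂ) * Complex.I + (k : ℂ) * (2 * (π : ℂ) * Complex.I) := by
    push_cast; ring
  rw [this, Complex.exp_add, Complex.exp_int_mul_two_pi_mul_I, mul_one]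

lemma Dker_neg (W : ℕ) (t : ℝ) : Dker W (-t) = (starRingEnd ℂ) (Dker W t) := by
  unfold Dker
  rw [map_sum]
  refine Finset.sum_congr rfl fun k _ => ?_
  rw [← Complex.exp_conj]
  congr 1
  simp only [map_mul, Complex.conj_I, Complex.conj_ofReal]
  push_cast
  ring

lemma norm_Dker_neg (W : ℕ) (t : ℝ) : ‖Dker W (-t)‖ = ‖Dker W t‖ := by
  rw [Dker_neg]; exact RCLike.norm_conj _

lemma Dker_eq_geom (W : ℕ) (t : ℝ) :
    Dker W t = (Complex.exp (((2 * π * t : ℝ) : ℂ) * Complex.I)) ^ (-(W : ℤ)) *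
      ∑ j ∈ Finset.range (2 * W + 1), (Complex.exp (((2 * π * t : ℝ) : ℂ) * Complex.I)) ^ j := by
  set z := Complex.exp (((2 * π * t : ℝ) : ℂ) * Complex.I) with hz
  have hz0 : z ≠ 0 := Complex.exp_ne_zero _
  have key : ∀ k : ℤ, Complex.exp (((2 * π * k * t : ℝ) : ℂ) * Complex.I) = z ^ k := by
    intro k
    rw [hz, ← Complex.exp_int_mul]
    congr 1
    push_cast; ring
  unfold Dker
  rw [Finset.mul_sum]
  refine Finset.sum_nbij' (fun k => (k + W).toNat) (fun j => (j : ℤ) - W) ?_ ?_ ?_ ?_ ?_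
  · intro k hk; simp only [Finset.mem_Icc, Finset.mem_range] at *; omega
  · intro j hj; simp only [Finset.mem_Icc, Finset.mem_range] at *; omega
  · intro k hk; simp only [Finset.mem_Icc] at hk
    show ((k + (W : ℤ)).toNat : ℤ) - W = k
    omega
  · intro j hj; simp only [Finset.mem_range] at hj
    show ((j : ℤ) - W + W).toNat = j
    omega
  · intro k hk
    simp only [Finset.mem_Icc] at hk
    show Complex.exp _ = z ^ (-(W:ℤ)) * z ^ ((k + (W:ℤ)).toNat)
    rw [key k, ← zpow_natCast z ((k + (W:ℤ)).toNat), ← zpow_add₀ hz0]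
    congr 1
    omega

lemma norm_Dker_le_inv_sin (W : ℕ) {t : ℝ} (h1 : 0 < t) (h2 : t < 1) :
    ‖Dker W t‖ ≤ (Real.sin (π * t))⁻¹ := by
  set z := Complex.exp (((2 * π * t : ℝ) : ℂ) * Complex.I) with hz
  have hz0 : z ≠ 0 := Complex.exp_ne_zero _
  have hsin : 0 < Real.sin (π * t) := by
    apply Real.sin_pos_of_pos_of_lt_pi (by positivity)
    nlinarith [Real.pi_pos]
  have hz1 : z ≠ 1 := by
    intro h
    rw [hz, Complex.exp_eq_one_iff] at h
    obtain ⟨n, hn⟩ := h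
    have hn' : ((2 * π * t : ℝ) : ℂ) = ((2 * π * (n : ℝ) : ℝ) : ℂ) := by
      refine mul_right_cancel₀ Complex.I_ne_zero ?_
      push_cast at hn ⊢
      linear_combination hn
    have h2' : (2 * π * t : ℝ) = 2 * π * (n : ℝ) := Complex.ofReal_injective hn'
    have hpi := Real.pi_pos
    have ht : t = (n : ℝ) := by nlinarith
    rcases le_or_gt (1 : ℤ) n with hn1 | hn1
    · have : (1 : ℝ) ≤ (n : ℝ) := by exact_mod_cast hn1
      linarith [ht ▸ this]
    · have : (n : ℝ) ≤ 0 := by exact_mod_cast (by omega : n ≤ 0)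
      linarith [ht ▸ this]
  have hnorm : ‖z - 1‖ = 2 * Real.sin (π * t) := by
    have hre : (z - 1).re = Real.cos (2 * π * t) - 1 := by
      rw [hz, Complex.sub_re, Complex.one_re, Complex.exp_ofReal_mul_I_re]
    have him : (z - 1).im = Real.sin (2 * π * t) := by
      rw [hz, Complex.sub_im, Complex.one_im, Complex.exp_ofReal_mul_I_im, sub_zero]
    have hsq : ‖z - 1‖ ^ 2 = (2 * Real.sin (π * t)) ^ 2 := by
      rw [Complex.sq_norm, Complex.normSq_apply, hre, him]
      have h2t : (2 : ℝ) * π * t = 2 * (π * t) := by ring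
      rw [h2t]
      nlinarith [Real.cos_two_mul (π * t), Real.sin_sq_add_cos_sq (π * t),
        Real.sin_sq_add_cos_sq (2 * (π * t))]
    have h1' : 0 ≤ ‖z - 1‖ := norm_nonneg _
    have h2' : 0 ≤ 2 * Real.sin (π * t) := by positivity
    nlinarith
  have hgeom : ∑ j ∈ Finset.range (2 * W + 1), z ^ j = (z ^ (2 * W + 1) - 1) / (z - 1) :=
    geom_sum_eq hz1 _
  have : ‖Dker W t‖ = ‖∑ j ∈ Finset.range (2 * W + 1), z ^ j‖ := by
    rw [Dker_eq_geom, ← hz, norm_mul, norm_zpow]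
    rw [Complex.norm_exp_ofReal_mul_I]
    simp
  rw [this, hgeom, norm_div, hnorm]
  have hnum : ‖z ^ (2 * W + 1) - 1‖ ≤ 2 := by
    calc ‖z ^ (2 * W + 1) - 1‖ ≤ ‖z ^ (2 * W + 1)‖ + ‖(1 : ℂ)‖ := norm_sub_le _ _
      _ ≤ 2 := by
        rw [norm_pow, Complex.norm_exp_ofReal_mul_I]
        norm_num
  rw [div_le_iff₀ (by positivity)]
  have heq : (Real.sin (π * t))⁻¹ * (2 * Real.sin (π * t)) = 2 := by field_simp
  rw [heq]
  exact hnum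



lemma cos_quad_bound_aux {u : ℝ} (h : 0 ≤ u) (hu : u ≤ π) :
    Real.cos u ≤ 1 - 2 * (u ^ 2 / π ^ 2) := by
  have hpi := Real.pi_pos
  have hhalf : u / 2 ≤ π / 2 := by linarith
  have hsin : 2 / π * (u / 2) ≤ Real.sin (u / 2) := Real.mul_le_sin (by positivity) hhalf
  have hcos : Real.cos u = 1 - 2 * Real.sin (u / 2) ^ 2 := by
    have h2 : Real.cos (2 * (u / 2)) = 2 * Real.cos (u / 2) ^ 2 - 1 := Real.cos_two_mul _
    have h3 : Real.sin (u / 2) ^ 2 + Real.cos (u / 2) ^ 2 = 1 := Real.sin_sq_add_cos_sq _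
    have h4 : (2 : ℝ) * (u / 2) = u := by ring
    rw [h4] at h2
    nlinarith [h2, h3]
  rw [hcos]
  have h5 : (2 / π * (u / 2)) ^ 2 ≤ Real.sin (u / 2) ^ 2 := by
    have h6 : 0 ≤ 2 / π * (u / 2) := by positivity
    nlinarith
  have h7 : (2 / π * (u / 2)) ^ 2 = u ^ 2 / π ^ 2 := by field_simp
  linarith [h5, h7 ▸ h5]

lemma cos_quad_bound {u : ℝ} (hu : |u| ≤ π) : Real.cos u ≤ 1 - 2 * (u ^ 2 / π ^ 2) := by
  rcases le_or_gt 0 u with h | h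
  · exact cos_quad_bound_aux h (by rwa [abs_of_nonneg h] at hu)
  · have := cos_quad_bound_aux (u := -u) (by linarith) (by rwa [abs_of_neg h] at hu)
    rw [Real.cos_neg] at this
    simpa [neg_sq] using this

lemma sumsq_Icc (W : ℕ) :
    ((2 * W + 1 : ℝ)) * W ^ 2 / 3 ≤ ∑ k ∈ Finset.Icc (-(W : ℤ)) W, (k : ℝ) ^ 2 := by
  induction W with
  | zero => simp
  | succ W ih =>
    have hset : Finset.Icc (-(W + 1 : ℤ)) (W + 1) =
        insert (-(W + 1 : ℤ)) (insert ((W : ℤ) + 1) (Finset.Icc (-(W : ℤ)) W)) := by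
      ext k; simp only [Finset.mem_Icc, Finset.mem_insert]; omega
    have h1 : (-(W + 1 : ℤ)) ∉ insert ((W : ℤ) + 1) (Finset.Icc (-(W : ℤ)) W) := by
      simp only [Finset.mem_insert, Finset.mem_Icc]; omega
    have h2 : ((W : ℤ) + 1) ∉ Finset.Icc (-(W : ℤ)) W := by
      simp only [Finset.mem_Icc]; omega
    push_cast
    rw [hset, Finset.sum_insert h1, Finset.sum_insert h2]
    push_cast
    push_cast at ih
    have hneg : (-((W : ℝ) + 1)) ^ 2 = ((W : ℝ) + 1) ^ 2 := by ring
    nlinarith [ih, hneg, Nat.cast_nonneg (α := ℝ) W]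




lemma norm_Dker_gauss (W : ℕ) {t : ℝ} (ht : 0 ≤ t) (ht2 : t ≤ 1 / (2 * (2 * W + 1))) :
    ‖Dker W t‖ ≤ (2 * W + 1) * Real.exp (-(W ^ 2 * t ^ 2)) := by
  have hpi := Real.pi_pos
  have habs : ∀ k ∈ Finset.Icc (-(W : ℤ)) W, |2 * π * k * t| ≤ π / 2 := by
    intro k hk
    simp only [Finset.mem_Icc] at hk
    have hkW : |(k : ℝ)| ≤ W := by
      rw [abs_le]; constructor <;> [exact_mod_cast hk.1; exact_mod_cast hk.2]
    have : |2 * π * k * t| = 2 * π * |(k : ℝ)| * t := by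
      rw [abs_mul, abs_of_nonneg ht, abs_mul, abs_mul]
      simp [abs_of_nonneg hpi.le]
    rw [this]
    have hW1 : (0:ℝ) < 2 * (2 * W + 1) := by positivity
    calc 2 * π * |(k : ℝ)| * t ≤ 2 * π * W * (1 / (2 * (2 * W + 1))) := by
          apply mul_le_mul (by nlinarith) ht2 ht (by positivity)
      _ ≤ π / 2 := by
          rw [mul_one_div, div_le_div_iff₀ hW1 (by norm_num)]
          nlinarith
  have hcos_nonneg : ∀ k ∈ Finset.Icc (-(W : ℤ)) W, 0 ≤ Real.cos (2 * π * k * t) := by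
    intro k hk
    have := abs_le.mp (habs k hk)
    exact Real.cos_nonneg_of_mem_Icc ⟨this.1, this.2⟩
  have hre_nonneg : 0 ≤ (Dker W t).re := by
    rw [Dker_re]; exact Finset.sum_nonneg hcos_nonneg
  rw [norm_Dker_eq_abs_re, abs_of_nonneg hre_nonneg, Dker_re]
  have hstep : ∑ k ∈ Finset.Icc (-(W : ℤ)) W, Real.cos (2 * π * k * t)
      ≤ ∑ k ∈ Finset.Icc (-(W : ℤ)) W, (1 - 8 * (k : ℝ) ^ 2 * t ^ 2) := by
    refine Finset.sum_le_sum fun k hk => ?_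
    have h1 : |2 * π * k * t| ≤ π := (habs k hk).trans (by linarith)
    have := cos_quad_bound h1
    have heq : 2 * ((2 * π * k * t) ^ 2 / π ^ 2) = 8 * (k : ℝ) ^ 2 * t ^ 2 := by
      field_simp; ring
    linarith [heq ▸ this]
  have hsum : ∑ k ∈ Finset.Icc (-(W : ℤ)) W, (1 - 8 * (k : ℝ) ^ 2 * t ^ 2)
      = (2 * W + 1 : ℝ) - 8 * t ^ 2 * ∑ k ∈ Finset.Icc (-(W : ℤ)) W, (k : ℝ) ^ 2 := by
    rw [Finset.sum_sub_distrib, Finset.sum_const, card_IccZ, Finset.mul_sum]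
    congr 1
    · push_cast; ring
    · exact Finset.sum_congr rfl fun k _ => by ring
  have hS := sumsq_Icc W
  have ht2' : (0:ℝ) ≤ t ^ 2 := sq_nonneg t
  have hfinal : (2 * W + 1 : ℝ) - 8 * t ^ 2 * ∑ k ∈ Finset.Icc (-(W : ℤ)) W, (k : ℝ) ^ 2
      ≤ (2 * W + 1) * Real.exp (-(W ^ 2 * t ^ 2)) := by
    have h1 : (2 * W + 1 : ℝ) - 8 * t ^ 2 * ∑ k ∈ Finset.Icc (-(W : ℤ)) W, (k : ℝ) ^ 2
        ≤ (2 * W + 1 : ℝ) * (1 - (W : ℝ) ^ 2 * t ^ 2) := by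
      have : 8 * t ^ 2 * ((2 * W + 1 : ℝ) * W ^ 2 / 3) ≤
          8 * t ^ 2 * ∑ k ∈ Finset.Icc (-(W : ℤ)) W, (k : ℝ) ^ 2 := by
        apply mul_le_mul_of_nonneg_left hS (by positivity)
      nlinarith [sq_nonneg ((W:ℝ) * t), Nat.cast_nonneg (α := ℝ) W]
    have h2 : 1 - (W : ℝ) ^ 2 * t ^ 2 ≤ Real.exp (-(W ^ 2 * t ^ 2)) := by
      linarith [Real.add_one_le_exp (-((W:ℝ) ^ 2 * t ^ 2))]
    have h3 : (0:ℝ) ≤ 2 * W + 1 := by positivity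
    nlinarith [h1, h2, h3]
  linarith [hstep, hsum ▸ hstep, hfinal]




lemma gauss_piece (W n : ℕ) (hW : 1 ≤ W) (hn : 1 ≤ n) :
    ∫ t in (0:ℝ)..(1 / (2 * (2 * W + 1))), Real.exp (-((n : ℝ) * W ^ 2) * t ^ 2)
      ≤ Real.sqrt π / (2 * Real.sqrt n * W) := by
  have hb : (0:ℝ) < (n : ℝ) * W ^ 2 := by
    have : (1:ℝ) ≤ n := by exact_mod_cast hn
    have : (1:ℝ) ≤ W := by exact_mod_cast hW
    positivity
  have hδ : (0:ℝ) ≤ 1 / (2 * (2 * W + 1)) := by positivity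
  rw [intervalIntegral.integral_of_le hδ]
  have h2 : ∫ t in Set.Ioc (0:ℝ) (1 / (2 * (2 * W + 1))), Real.exp (-((n : ℝ) * W ^ 2) * t ^ 2)
      ≤ ∫ t in Set.Ioi (0:ℝ), Real.exp (-((n : ℝ) * W ^ 2) * t ^ 2) := by
    apply setIntegral_mono_set ((integrable_exp_neg_mul_sq hb).integrableOn)
    · exact Filter.Eventually.of_forall fun t => (Real.exp_pos _).le
    · exact HasSubset.Subset.eventuallyLE Set.Ioc_subset_Ioi_self
  have h3 : ∫ t in Set.Ioi (0:ℝ), Real.exp (-((n : ℝ) * W ^ 2) * t ^ 2)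
      = Real.sqrt (π / ((n : ℝ) * W ^ 2)) / 2 := integral_gaussian_Ioi _
  have h4 : Real.sqrt (π / ((n : ℝ) * W ^ 2)) = Real.sqrt π / (Real.sqrt n * W) := by
    rw [Real.sqrt_div Real.pi_pos.le, Real.sqrt_mul (by positivity), Real.sqrt_sq (by positivity)]
  have : Real.sqrt (π / ((n : ℝ) * W ^ 2)) / 2 = Real.sqrt π / (2 * Real.sqrt n * W) := by
    rw [h4]; ring
  linarith [h2, h3 ▸ h2]

lemma mid_piece (W n : ℕ) (hW : 1 ≤ W) (hn : 2 ≤ n) :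
    ∫ t in (1 / (2 * (2 * (W : ℝ) + 1)))..(1 / 2 : ℝ), ((2 * t)⁻¹) ^ n
      ≤ (2 * (W : ℝ) + 1) ^ n / (2 * ((n : ℝ) - 1) * (2 * W + 1)) := by
  have hWR : (1:ℝ) ≤ W := by exact_mod_cast hW
  set A : ℝ := 2 * (W : ℝ) + 1 with hA
  have hA1 : (1:ℝ) < A := by simp [hA]; nlinarith
  have hA0 : (0:ℝ) < A := by linarith
  have hδpos : (0:ℝ) < 1 / (2 * A) := by positivity
  have hint : ∀ t : ℝ, ((2 * t)⁻¹) ^ n = (fun u : ℝ => u ^ (-(n:ℤ))) (2 * t) := by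
    intro t
    simp only [zpow_neg, zpow_natCast, inv_pow]
  have h1 : ∫ t in (1 / (2 * A))..(1 / 2 : ℝ), ((2 * t)⁻¹) ^ n
      = (2:ℝ)⁻¹ • ∫ u in (2 * (1 / (2 * A)))..(2 * (1/2 : ℝ)), u ^ (-(n:ℤ)) := by
    rw [← intervalIntegral.integral_comp_mul_left (fun u : ℝ => u ^ (-(n:ℤ))) (two_ne_zero)]
    exact intervalIntegral.integral_congr fun t _ => hint t
  have he1 : 2 * (1 / (2 * A)) = A⁻¹ := by field_simp
  have he2 : 2 * (1/2 : ℝ) = 1 := by norm_num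
  rw [h1, he1, he2]
  have hnot : (0:ℝ) ∉ Set.uIcc (A⁻¹) 1 := by
    rw [Set.mem_uIcc]
    push_neg
    constructor
    · intro h; exfalso; have : (0:ℝ) < A⁻¹ := by positivity
      linarith
    · intro h; linarith
  have h2 : ∫ u in (A⁻¹ : ℝ)..1, u ^ (-(n:ℤ))
      = ((1:ℝ) ^ (-(n:ℤ) + 1) - (A⁻¹) ^ (-(n:ℤ) + 1)) / ((-(n:ℤ) + 1) : ℝ) := by
    rw [integral_zpow]
    · norm_num
    · right
      constructor
      · omega
      · exact hnot
  rw [h2]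
  have h3 : ((1:ℝ)) ^ (-(n:ℤ) + 1) = 1 := one_zpow _
  have h4 : (A⁻¹ : ℝ) ^ (-(n:ℤ) + 1) = A ^ ((n:ℤ) - 1) := by
    rw [inv_zpow, ← zpow_neg]
    congr 1
    ring
  have h5 : (A : ℝ) ^ ((n:ℤ) - 1) = A ^ n / A := by
    rw [zpow_sub_one₀ (ne_of_gt hA0), zpow_natCast, div_eq_mul_inv]
  have hden : ((-(n:ℤ) + 1) : ℝ) = -((n:ℝ) - 1) := by push_cast; ring
  rw [h3, h4, h5, hden, smul_eq_mul]
  have hn1 : (0:ℝ) < (n : ℝ) - 1 := by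
    have : (2:ℝ) ≤ n := by exact_mod_cast hn
    linarith
  have hAn : (0:ℝ) < A ^ n := by positivity
  have lhs_eq : (2:ℝ)⁻¹ * ((1 - A ^ n / A) / (-((n:ℝ) - 1)))
      = (A ^ n / A - 1) / (2 * ((n:ℝ) - 1)) := by
    have hAne : A ≠ 0 := ne_of_gt hA0
    have hdne : (n:ℝ) - 1 ≠ 0 := ne_of_gt hn1
    rw [div_neg, mul_neg]
    rw [show (A ^ n / A - 1) / (2 * ((n:ℝ) - 1))
        = -((2:ℝ)⁻¹ * ((1 - A ^ n / A) / ((n:ℝ) - 1))) by field_simp; ring_nf]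
  rw [lhs_eq, div_le_div_iff₀ (by positivity) (by positivity)]
  have hdiv : A ^ n / A * A = A ^ n := div_mul_cancel₀ _ (ne_of_gt hA0)
  nlinarith [hAn, hn1, hA0, hdiv, mul_pos hn1 hA0]

set_option maxHeartbeats 1000000 in
lemma Kbound (W n : ℕ) (hW : 1 ≤ W) (hn : 2 ≤ n) :
    ∫ t in (0:ℝ)..1, ‖Dker W t‖ ^ n
      ≤ 3 * (2 * (W : ℝ) + 1) ^ n / (Real.sqrt n * W) := by
  have hWR : (1:ℝ) ≤ (W : ℝ) := by exact_mod_cast hW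
  set δ : ℝ := 1 / (2 * (2 * (W : ℝ) + 1)) with hδdef
  have hδ0 : 0 < δ := by positivity
  have hδ6 : δ ≤ 1 / 6 := by
    rw [hδdef, div_le_div_iff₀ (by positivity) (by norm_num)]
    nlinarith
  have hδh : δ ≤ 1 / 2 := by linarith
  have hδ1 : δ < 1 := by linarith
  set F : ℝ → ℝ := fun t => ‖Dker W t‖ ^ n with hF
  have hFc : Continuous F := (continuous_Dker W).norm.pow n
  have hFi : ∀ a b : ℝ, IntervalIntegrable F MeasureSpace.volume a b :=
    fun a b => hFc.intervalIntegrable a b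
  -- split the integral
  have hsplit : ∫ t in (0:ℝ)..1, F t
      = (∫ t in (0:ℝ)..δ, F t) + ((∫ t in δ..(1/2:ℝ), F t)
        + ((∫ t in (1/2:ℝ)..(1-δ), F t) + (∫ t in (1-δ)..(1:ℝ), F t))) := by
    rw [intervalIntegral.integral_add_adjacent_intervals (hFi (1/2) (1-δ)) (hFi (1-δ) 1),
      intervalIntegral.integral_add_adjacent_intervals (hFi δ (1/2)) (hFi (1/2) 1),
      intervalIntegral.integral_add_adjacent_intervals (hFi 0 δ) (hFi δ 1)]
  -- Piece 1
  have hgauss_int : Continuous fun t : ℝ =>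
      (2 * (W:ℝ) + 1) ^ n * Real.exp (-((n:ℝ) * (W:ℝ) ^ 2) * t ^ 2) := by
    exact continuous_const.mul ((continuous_const.mul (continuous_pow 2)).rexp)
  have hP1 : (∫ t in (0:ℝ)..δ, F t)
      ≤ (2 * (W:ℝ) + 1) ^ n * (Real.sqrt π / (2 * Real.sqrt n * W)) := by
    have hmono : (∫ t in (0:ℝ)..δ, F t) ≤ ∫ t in (0:ℝ)..δ,
        (2 * (W:ℝ) + 1) ^ n * Real.exp (-((n:ℝ) * (W:ℝ) ^ 2) * t ^ 2) := by
      apply intervalIntegral.integral_mono_on hδ0.le (hFi 0 δ)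
        (hgauss_int.intervalIntegrable 0 δ)
      intro t ht
      have h1 : ‖Dker W t‖ ≤ (2 * (W:ℝ) + 1) * Real.exp (-((W:ℝ) ^ 2 * t ^ 2)) :=
        norm_Dker_gauss W ht.1 ht.2
      calc F t ≤ ((2 * (W:ℝ) + 1) * Real.exp (-((W:ℝ) ^ 2 * t ^ 2))) ^ n :=
            pow_le_pow_left₀ (norm_nonneg _) h1 n
        _ = (2 * (W:ℝ) + 1) ^ n * Real.exp (-((n:ℝ) * (W:ℝ) ^ 2) * t ^ 2) := by
            rw [mul_pow, ← Real.exp_nat_mul]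
            congr 2
            ring
    rw [intervalIntegral.integral_const_mul] at hmono
    refine hmono.trans ?_
    exact mul_le_mul_of_nonneg_left (gauss_piece W n hW (by omega)) (by positivity)
  -- Piece 2
  have hg2c : ContinuousOn (fun t : ℝ => ((2 * t)⁻¹) ^ n) (Set.uIcc δ (1/2)) := by
    apply ContinuousOn.pow
    apply ContinuousOn.inv₀ (continuous_const.mul continuous_id).continuousOn
    intro t ht
    rw [Set.uIcc_of_le hδh] at ht
    simp only [Pi.mul_apply, id_eq]
    exact ne_of_gt (by linarith [ht.1, hδ0])
  have hP2 : (∫ t in δ..(1/2:ℝ), F t)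
      ≤ (2 * (W : ℝ) + 1) ^ n / (2 * ((n : ℝ) - 1) * (2 * W + 1)) := by
    have hmono : (∫ t in δ..(1/2:ℝ), F t) ≤ ∫ t in δ..(1/2:ℝ), ((2 * t)⁻¹) ^ n := by
      apply intervalIntegral.integral_mono_on hδh (hFi δ (1/2))
        (hg2c.intervalIntegrable)
      intro t ht
      have ht0 : 0 < t := lt_of_lt_of_le hδ0 ht.1
      have ht1 : t < 1 := lt_of_le_of_lt ht.2 (by norm_num)
      have hsin : 2 * t ≤ Real.sin (π * t) := by
        have := Real.mul_le_sin (x := π * t) (mul_nonneg Real.pi_pos.le ht0.le)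
          (by nlinarith [Real.pi_pos, ht.2])
        have hh : 2 / π * (π * t) = 2 * t := by
          field_simp
        linarith [hh ▸ this]
      have h2t : 0 < 2 * t := by linarith
      have hDb : ‖Dker W t‖ ≤ (2 * t)⁻¹ :=
        (norm_Dker_le_inv_sin W ht0 ht1).trans (inv_anti₀ h2t hsin)
      exact pow_le_pow_left₀ (norm_nonneg _) hDb n
    exact hmono.trans (mid_piece W n hW hn)
  -- Piece 3
  have hP3 : (∫ t in (1/2:ℝ)..(1-δ), F t)
      ≤ (2 * (W : ℝ) + 1) ^ n / (2 * ((n : ℝ) - 1) * (2 * W + 1)) := by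
    have hle : (1/2:ℝ) ≤ 1 - δ := by linarith
    have hmono : (∫ t in (1/2:ℝ)..(1-δ), F t)
        ≤ ∫ t in (1/2:ℝ)..(1-δ), ((2 * (1 - t))⁻¹) ^ n := by
      have hgc : ContinuousOn (fun t : ℝ => ((2 * (1 - t))⁻¹) ^ n)
          (Set.uIcc (1/2:ℝ) (1-δ)) := by
        apply ContinuousOn.pow
        apply ContinuousOn.inv₀ (continuous_const.mul (continuous_const.sub continuous_id)).continuousOn
        intro t ht
        rw [Set.uIcc_of_le hle] at ht
        simp only [Pi.mul_apply, Pi.sub_apply, id_eq]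
        exact ne_of_gt (by linarith [ht.2, hδ0])
      apply intervalIntegral.integral_mono_on hle (hFi _ _) hgc.intervalIntegrable
      intro t ht
      have ht0 : 0 < t := lt_of_lt_of_le (by norm_num) ht.1
      have ht1 : t < 1 := lt_of_le_of_lt ht.2 (by linarith)
      have h1t : 0 < 1 - t := by linarith
      have hsin : 2 * (1 - t) ≤ Real.sin (π * t) := by
        have hrw : Real.sin (π * t) = Real.sin (π * (1 - t)) := by
          rw [show π * (1 - t) = π - π * t by ring, Real.sin_pi_sub]
        have := Real.mul_le_sin (x := π * (1 - t)) (mul_nonneg Real.pi_pos.le h1t.le)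
          (by nlinarith [Real.pi_pos, ht.1])
        have hh : 2 / π * (π * (1 - t)) = 2 * (1 - t) := by field_simp
        rw [hrw]
        linarith [hh ▸ this]
      have h2t : 0 < 2 * (1 - t) := by linarith
      have hDb : ‖Dker W t‖ ≤ (2 * (1 - t))⁻¹ :=
        (norm_Dker_le_inv_sin W ht0 ht1).trans (inv_anti₀ h2t hsin)
      exact pow_le_pow_left₀ (norm_nonneg _) hDb n
    have hcomp : (∫ t in (1/2:ℝ)..(1-δ), ((2 * (1 - t))⁻¹) ^ n)
        = ∫ u in δ..(1/2:ℝ), ((2 * u)⁻¹) ^ n := by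
      have := intervalIntegral.integral_comp_sub_left
        (a := (1/2:ℝ)) (b := 1-δ) (fun u : ℝ => ((2 * u)⁻¹) ^ n) 1
      rw [show (1:ℝ) - (1-δ) = δ by ring, show (1:ℝ) - 1/2 = 1/2 by ring] at this
      exact this
    rw [hcomp] at hmono
    exact hmono.trans (mid_piece W n hW hn)
  -- Piece 4
  have hP4 : (∫ t in (1-δ)..(1:ℝ), F t)
      ≤ (2 * (W:ℝ) + 1) ^ n * (Real.sqrt π / (2 * Real.sqrt n * W)) := by
    have hle : (1 - δ : ℝ) ≤ 1 := by linarith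
    have hgc : Continuous fun t : ℝ =>
        (2 * (W:ℝ) + 1) ^ n * Real.exp (-((n:ℝ) * (W:ℝ) ^ 2) * (1 - t) ^ 2) :=
      continuous_const.mul ((continuous_const.mul ((continuous_const.sub continuous_id).pow 2)).rexp)
    have hmono : (∫ t in (1-δ)..(1:ℝ), F t) ≤ ∫ t in (1-δ)..(1:ℝ),
        (2 * (W:ℝ) + 1) ^ n * Real.exp (-((n:ℝ) * (W:ℝ) ^ 2) * (1 - t) ^ 2) := by
      apply intervalIntegral.integral_mono_on hle (hFi _ _) (hgc.intervalIntegrable _ _)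
      intro t ht
      have hsym : ‖Dker W t‖ = ‖Dker W (1 - t)‖ := by
        have hper : Dker W t = Dker W (t - 1) := by
          have := Dker_periodic W (t - 1)
          rw [show t - 1 + 1 = t by ring] at this
          exact this
        rw [hper, show t - 1 = -(1 - t) by ring, norm_Dker_neg]
      have h1 : ‖Dker W (1 - t)‖ ≤ (2 * (W:ℝ) + 1) * Real.exp (-((W:ℝ) ^ 2 * (1-t) ^ 2)) :=
        norm_Dker_gauss W (by linarith [ht.2]) (by linarith [ht.1])
      calc F t = ‖Dker W (1 - t)‖ ^ n := by rw [hF]; simp only []; rw [hsym]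
        _ ≤ ((2 * (W:ℝ) + 1) * Real.exp (-((W:ℝ) ^ 2 * (1-t) ^ 2))) ^ n :=
            pow_le_pow_left₀ (norm_nonneg _) h1 n
        _ = (2 * (W:ℝ) + 1) ^ n * Real.exp (-((n:ℝ) * (W:ℝ) ^ 2) * (1 - t) ^ 2) := by
            rw [mul_pow, ← Real.exp_nat_mul]
            congr 2
            ring
    have hcomp : (∫ t in (1-δ)..(1:ℝ),
        (2 * (W:ℝ) + 1) ^ n * Real.exp (-((n:ℝ) * (W:ℝ) ^ 2) * (1 - t) ^ 2))
        = (2 * (W:ℝ) + 1) ^ n * ∫ u in (0:ℝ)..δ, Real.exp (-((n:ℝ) * (W:ℝ) ^ 2) * u ^ 2) := by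
      rw [intervalIntegral.integral_const_mul]
      congr 1
      have := intervalIntegral.integral_comp_sub_left
        (a := (1-δ:ℝ)) (b := (1:ℝ)) (fun u : ℝ => Real.exp (-((n:ℝ) * (W:ℝ) ^ 2) * u ^ 2)) 1
      rw [show (1:ℝ) - 1 = 0 by ring, show (1:ℝ) - (1 - δ) = δ by ring] at this
      exact this
    rw [hcomp] at hmono
    refine hmono.trans ?_
    exact mul_le_mul_of_nonneg_left (gauss_piece W n hW (by omega)) (by positivity)
  -- final arithmetic
  have hs0 : 0 < Real.sqrt n := Real.sqrt_pos.mpr (by positivity)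
  have hnR : (2:ℝ) ≤ (n : ℝ) := by exact_mod_cast hn
  have hsn : Real.sqrt n ≤ (n : ℝ) := by
    have h1 : ((n:ℝ)) ≤ (n:ℝ) ^ 2 := by nlinarith
    calc Real.sqrt n ≤ Real.sqrt ((n:ℝ)^2) := Real.sqrt_le_sqrt h1
      _ = (n : ℝ) := Real.sqrt_sq (by positivity)
  have hπ : Real.sqrt π ≤ 2 := by
    calc Real.sqrt π ≤ Real.sqrt 4 := Real.sqrt_le_sqrt (by linarith [Real.pi_le_four])
      _ = 2 := by rw [show (4:ℝ) = 2 ^ 2 by norm_num, Real.sqrt_sq (by norm_num)]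
  have hA0 : (0:ℝ) < 2 * (W:ℝ) + 1 := by linarith
  have hAn : (0:ℝ) < (2 * (W:ℝ) + 1) ^ n := by positivity
  have hsW : 0 < Real.sqrt n * (W : ℝ) := by positivity
  set E : ℝ := (2 * (W:ℝ) + 1) ^ n / (Real.sqrt n * W) with hEdef
  have hq1 : Real.sqrt π / (2 * Real.sqrt n * W) ≤ 1 / (Real.sqrt n * W) := by
    rw [div_le_div_iff₀ (by positivity) (by positivity)]
    nlinarith [mul_le_mul_of_nonneg_right hπ hsW.le]
  have hX : (2 * (W:ℝ) + 1) ^ n * (Real.sqrt π / (2 * Real.sqrt n * W)) ≤ E := by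
    have := mul_le_mul_of_nonneg_left hq1 hAn.le
    calc (2 * (W:ℝ) + 1) ^ n * (Real.sqrt π / (2 * Real.sqrt n * W))
        ≤ (2 * (W:ℝ) + 1) ^ n * (1 / (Real.sqrt n * W)) := this
      _ = E := by rw [hEdef]; ring
  have hM : (2 * (W : ℝ) + 1) ^ n / (2 * ((n : ℝ) - 1) * (2 * W + 1)) ≤ E / 2 := by
    have hden : 2 * (Real.sqrt n * W) ≤ 2 * ((n : ℝ) - 1) * (2 * W + 1) := by
      have h1 : Real.sqrt n * W ≤ (n:ℝ) * W :=
        mul_le_mul_of_nonneg_right hsn (by linarith)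
      nlinarith [h1]
    have h2 : (2 * (W : ℝ) + 1) ^ n / (2 * ((n : ℝ) - 1) * (2 * W + 1))
        ≤ (2 * (W : ℝ) + 1) ^ n / (2 * (Real.sqrt n * W)) :=
      div_le_div_of_nonneg_left hAn.le (by positivity) hden
    calc (2 * (W : ℝ) + 1) ^ n / (2 * ((n : ℝ) - 1) * (2 * W + 1))
        ≤ (2 * (W : ℝ) + 1) ^ n / (2 * (Real.sqrt n * W)) := h2
      _ = E / 2 := by rw [hEdef]; ring
  have hE3 : 3 * (2 * (W:ℝ) + 1) ^ n / (Real.sqrt n * W) = 3 * E := by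
    rw [hEdef]; ring
  rw [hsplit, hE3]
  linarith [hP1, hP2, hP3, hP4, hX, hM]




/-- Scaling invariance of the moment integrals. -/
lemma scale_int (W n : ℕ) (x : ℤ) (hx : x ≠ 0) :
    ∫ t in (0:ℝ)..1, ‖Dker W ((x : ℝ) * t)‖ ^ n = ∫ t in (0:ℝ)..1, ‖Dker W t‖ ^ n := by
  set g : ℝ → ℝ := fun t => ‖Dker W t‖ ^ n with hg
  have hgc : Continuous g := (continuous_Dker W).norm.pow n
  have hgper : Function.Periodic g 1 := fun t => by
    simp only [hg]
    rw [Dker_periodic W t]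
  have hgneg : ∀ t, g (-t) = g t := fun t => by
    simp only [hg]
    rw [norm_Dker_neg]
  have hgint : ∀ t₁ t₂ : ℝ, IntervalIntegrable g MeasureSpace.volume t₁ t₂ :=
    fun t₁ t₂ => hgc.intervalIntegrable t₁ t₂
  -- positive case
  have hpos : ∀ m : ℕ, 1 ≤ m → ∫ t in (0:ℝ)..1, g ((m : ℝ) * t) = ∫ t in (0:ℝ)..1, g t := by
    intro m hm
    have hm0 : (m : ℝ) ≠ 0 := by positivity
    rw [intervalIntegral.integral_comp_mul_left g hm0]
    rw [mul_zero, mul_one]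
    have hz := hgper.intervalIntegral_add_zsmul_eq (m : ℤ) 0 hgint
    rw [zero_add, zero_add] at hz
    have he : ((m : ℤ) • (1:ℝ)) = (m : ℝ) := by
      rw [zsmul_eq_mul]; push_cast; ring
    rw [he] at hz
    rw [hz, zsmul_eq_mul]
    push_cast
    rw [smul_eq_mul, ← mul_assoc, inv_mul_cancel₀ hm0, one_mul]
  rcases lt_or_gt_of_ne hx with hneg | hposx
  · have h1 : ∀ t : ℝ, g ((x : ℝ) * t) = g (((-x).toNat : ℝ) * t) := by
      intro t
      have : ((x : ℝ) * t) = -((((-x).toNat : ℝ)) * t) := by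
        have : (((-x).toNat : ℝ)) = -(x : ℝ) := by
          rw [show ((-x).toNat : ℝ) = (((-x).toNat : ℤ) : ℝ) by push_cast; ring]
          rw [Int.toNat_of_nonneg (by omega)]
          push_cast; ring
        rw [this]; ring
      rw [this, hgneg]
    rw [intervalIntegral.integral_congr (fun t _ => h1 t)]
    exact hpos (-x).toNat (by omega)
  · have h1 : ∀ t : ℝ, g ((x : ℝ) * t) = g ((x.toNat : ℝ) * t) := by
      intro t
      congr 2
      rw [show (x.toNat : ℝ) = ((x.toNat : ℤ) : ℝ) by push_cast; ring]
      rw [Int.toNat_of_nonneg (by omega)]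
    rw [intervalIntegral.integral_congr (fun t _ => h1 t)]
    exact hpos x.toNat (by omega)

/-- Orthogonality. -/
lemma orth (m : ℤ) :
    (∫ t in (0:ℝ)..1, Complex.exp (((2 * π * (m : ℝ) * t : ℝ) : ℂ) * Complex.I))
      = if m = 0 then 1 else 0 := by
  by_cases hm : m = 0
  · simp [hm]
  · rw [if_neg hm]
    set c : ℂ := ((2 * π * (m : ℝ) : ℝ) : ℂ) * Complex.I with hc
    have hm0 : ((m : ℝ)) ≠ 0 := by exact_mod_cast hm
    have hcne : c ≠ 0 := by
      apply mul_ne_zero _ Complex.I_ne_zero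
      rw [Complex.ofReal_ne_zero]
      positivity
    have heq : ∀ t : ℝ, Complex.exp (((2 * π * (m : ℝ) * t : ℝ) : ℂ) * Complex.I)
        = Complex.exp (c * t) := by
      intro t
      congr 1
      rw [hc]
      push_cast
      ring
    rw [intervalIntegral.integral_congr (fun t _ => heq t), integral_exp_mul_complex hcne]
    have h1 : c * (1:ℝ) = (m : ℂ) * (2 * (π:ℂ) * Complex.I) := by
      rw [hc]; push_cast; ring
    have h0 : c * (0:ℝ) = 0 := by rw [hc]; push_cast; ring
    rw [h1, h0, Complex.exp_int_mul_two_pi_mul_I, Complex.exp_zero]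
    simp

/-- AM-GM in the form we need. -/
lemma amgm (n : ℕ) (hn : 0 < n) (b : Fin n → ℝ) (hb : ∀ i, 0 ≤ b i) :
    ∏ i, b i ≤ ∑ i, (1 / (n : ℝ)) * b i ^ n := by
  have hn0 : (0:ℝ) < (n:ℝ) := by exact_mod_cast hn
  have hw : ∀ i ∈ Finset.univ (α := Fin n), (0:ℝ) ≤ 1 / (n:ℝ) := fun i _ => div_nonneg zero_le_one (Nat.cast_nonneg n)
  have hw' : ∑ _i : Fin n, (1 / (n:ℝ)) = 1 := by
    rw [Finset.sum_const, Finset.card_univ, Fintype.card_fin, nsmul_eq_mul]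
    field_simp
  have hz : ∀ i ∈ Finset.univ (α := Fin n), (0:ℝ) ≤ b i ^ n := fun i _ => pow_nonneg (hb i) n
  have := Real.geom_mean_le_arith_mean_weighted Finset.univ (fun _ => 1 / (n:ℝ))
    (fun i => b i ^ n) hw hw' hz
  refine le_trans (le_of_eq ?_) this
  refine (Finset.prod_congr rfl fun i _ => ?_).symm
  show (b i ^ n : ℝ) ^ ((1:ℝ) / (n:ℝ)) = b i
  rw [← Real.rpow_natCast (b i) n, ← Real.rpow_mul (hb i)]
  rw [mul_one_div, div_self (ne_of_gt hn0), Real.rpow_one]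




lemma count_eq (n W : ℕ) (x : Fin n → ℤ) :
    ((((Fintype.piFinset fun _ : Fin n => Finset.Icc (-(W : ℤ)) W).filter
        fun a => ∑ i, a i * x i = 0).card : ℕ) : ℂ)
      = ∫ t in (0:ℝ)..1, ∏ i, Dker W ((x i : ℝ) * t) := by
  set P := Fintype.piFinset fun _ : Fin n => Finset.Icc (-(W : ℤ)) W with hP
  have step1 : (((P.filter fun a => ∑ i, a i * x i = 0).card : ℕ) : ℂ)
      = ∑ a ∈ P, if (∑ i, a i * x i) = 0 then (1:ℂ) else 0 := by
    rw [Finset.card_filter]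
    push_cast
    exact Finset.sum_congr rfl fun a _ => by split <;> simp
  have step2 : ∀ a ∈ P, (if (∑ i, a i * x i) = 0 then (1:ℂ) else 0)
      = ∫ t in (0:ℝ)..1,
          Complex.exp (((2 * π * ((∑ i, a i * x i : ℤ) : ℝ) * t : ℝ) : ℂ) * Complex.I) := by
    intro a _
    rw [orth]
  rw [step1, Finset.sum_congr rfl step2]
  have hcont : ∀ a : Fin n → ℤ, Continuous fun t : ℝ =>
      Complex.exp (((2 * π * ((∑ i, a i * x i : ℤ) : ℝ) * t : ℝ) : ℂ) * Complex.I) := by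
    intro a
    exact Complex.continuous_exp.comp
      ((Complex.continuous_ofReal.comp (by continuity)).mul continuous_const)
  rw [← intervalIntegral.integral_finset_sum (s := P)
    (fun a _ => (hcont a).intervalIntegrable 0 1)]
  apply intervalIntegral.integral_congr
  intro t _
  show (∑ a ∈ P, Complex.exp (((2 * π * ((∑ i, a i * x i : ℤ) : ℝ) * t : ℝ) : ℂ) * Complex.I))
      = ∏ i, Dker W ((x i : ℝ) * t)
  have hprod : ∏ i, Dker W ((x i : ℝ) * t)
      = ∑ a ∈ P, ∏ i, Complex.exp
          (((2 * π * ((a i : ℤ) : ℝ) * ((x i : ℝ) * t) : ℝ) : ℂ) * Complex.I) := by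
    rw [hP]
    exact Finset.prod_univ_sum _ _
  rw [hprod]
  refine Finset.sum_congr rfl fun a _ => ?_
  rw [← Complex.exp_sum]
  congr 1
  push_cast
  rw [← Finset.sum_mul]
  congr 1
  rw [Finset.mul_sum, Finset.sum_mul]
  exact Finset.sum_congr rfl fun i _ => by ring




/-- Anti-concentration: for `a` uniform on `{-W,…,W}^n` and a fixed `x` with
`1 ≤ |x i| ≤ q - 1`, the probability that `aᵀx = 0` is at most `C/(√n · W)`, with `C`
depending only on `q`. (Stated by counting: the number of `a ∈ {-W,…,W}^n` with
`∑ aᵢxᵢ = 0` is at most `C/(√n·W) · (2W+1)^n`.) -/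
theorem stmt_10 (q : ℕ) (hq : 2 ≤ q) :
    ∃ C : ℝ, 0 < C ∧ ∀ (n W : ℕ), 0 < n → 1 ≤ W →
      ∀ x : Fin n → ℤ, (∀ i, x i ≠ 0 ∧ |x i| ≤ (q : ℤ) - 1) →
        (((Fintype.piFinset fun _ : Fin n => Finset.Icc (-(W : ℤ)) W).filter
            fun a => ∑ i, a i * x i = 0).card : ℝ)
          ≤ C / (Real.sqrt n * (W : ℝ)) * (2 * (W : ℝ) + 1) ^ n := by
  refine ⟨3, by norm_num, ?_⟩
  intro n W hn hW x hx
  have hWR : (1:ℝ) ≤ (W : ℝ) := by exact_mod_cast hW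
  have hW0 : (0:ℝ) < (W : ℝ) := by linarith
  rcases eq_or_lt_of_le (by omega : 1 ≤ n) with hn1 | hn2
  · -- n = 1
    have hn1' : n = 1 := hn1.symm
    subst hn1'
    have hsub : ((Fintype.piFinset fun _ : Fin 1 => Finset.Icc (-(W : ℤ)) W).filter
        fun a => ∑ i, a i * x i = 0) ⊆ {fun _ => 0} := by
      intro a ha
      rw [Finset.mem_filter] at ha
      have hsum : a 0 * x 0 = 0 := by
        have := ha.2
        rwa [Fin.sum_univ_one] at this
      have ha0 : a 0 = 0 := by
        rcases mul_eq_zero.mp hsum with h | h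
        · exact h
        · exact absurd h (hx 0).1
      rw [Finset.mem_singleton]
      funext j
      rw [Subsingleton.elim j (0 : Fin 1)]
      exact ha0
    have hcard := Finset.card_le_card hsub
    rw [Finset.card_singleton] at hcard
    have h1 : (((Fintype.piFinset fun _ : Fin 1 => Finset.Icc (-(W : ℤ)) W).filter
        fun a => ∑ i, a i * x i = 0).card : ℝ) ≤ 1 := by exact_mod_cast hcard
    refine h1.trans ?_
    rw [Nat.cast_one, Real.sqrt_one, one_mul]
    rw [pow_one, div_mul_eq_mul_div, le_div_iff₀ hW0]
    nlinarith
  · -- n ≥ 2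
    have hn2' : 2 ≤ n := hn2
    have hs0 : 0 < Real.sqrt n := Real.sqrt_pos.mpr (by positivity)
    have hDc : ∀ c : ℝ, Continuous fun t : ℝ => Dker W (c * t) := fun c =>
      (continuous_Dker W).comp (continuous_const.mul continuous_id)
    have hnormN : ((((Fintype.piFinset fun _ : Fin n => Finset.Icc (-(W : ℤ)) W).filter
        fun a => ∑ i, a i * x i = 0).card : ℕ) : ℝ)
        = ‖((((Fintype.piFinset fun _ : Fin n => Finset.Icc (-(W : ℤ)) W).filter
        fun a => ∑ i, a i * x i = 0).card : ℕ) : ℂ)‖ := by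
      rw [Complex.norm_natCast]
    have h2 : ‖((((Fintype.piFinset fun _ : Fin n => Finset.Icc (-(W : ℤ)) W).filter
        fun a => ∑ i, a i * x i = 0).card : ℕ) : ℂ)‖
        ≤ ∫ t in (0:ℝ)..1, ‖∏ i, Dker W ((x i : ℝ) * t)‖ := by
      rw [count_eq n W x]
      exact intervalIntegral.norm_integral_le_integral_norm (by norm_num)
    have h3 : (∫ t in (0:ℝ)..1, ‖∏ i, Dker W ((x i : ℝ) * t)‖)
        = ∫ t in (0:ℝ)..1, ∏ i, ‖Dker W ((x i : ℝ) * t)‖ :=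
      intervalIntegral.integral_congr fun t _ => norm_prod _ _
    have hc1 : Continuous fun t : ℝ => ∏ i, ‖Dker W ((x i : ℝ) * t)‖ :=
      continuous_finset_prod _ fun i _ => (hDc (x i : ℝ)).norm
    have hcterm : ∀ i : Fin n, Continuous fun t : ℝ =>
        (1 / (n:ℝ)) * ‖Dker W ((x i : ℝ) * t)‖ ^ n :=
      fun i => continuous_const.mul ((hDc (x i : ℝ)).norm.pow n)
    have hc2 : Continuous fun t : ℝ => ∑ i, (1 / (n:ℝ)) * ‖Dker W ((x i : ℝ) * t)‖ ^ n :=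
      continuous_finset_sum _ fun i _ => hcterm i
    have h4 : (∫ t in (0:ℝ)..1, ∏ i, ‖Dker W ((x i : ℝ) * t)‖)
        ≤ ∫ t in (0:ℝ)..1, ∑ i, (1 / (n:ℝ)) * ‖Dker W ((x i : ℝ) * t)‖ ^ n := by
      apply intervalIntegral.integral_mono_on (by norm_num)
        (hc1.intervalIntegrable 0 1) (hc2.intervalIntegrable 0 1)
      intro t _
      exact amgm n (by omega) _ (fun i => norm_nonneg _)
    have h5 : (∫ t in (0:ℝ)..1, ∑ i, (1 / (n:ℝ)) * ‖Dker W ((x i : ℝ) * t)‖ ^ n)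
        = ∑ i, (1 / (n:ℝ)) * ∫ t in (0:ℝ)..1, ‖Dker W ((x i : ℝ) * t)‖ ^ n := by
      rw [intervalIntegral.integral_finset_sum (s := Finset.univ)
        (f := fun i (t : ℝ) => (1 / (n:ℝ)) * ‖Dker W ((x i : ℝ) * t)‖ ^ n)
        (fun i _ => (hcterm i).intervalIntegrable 0 1)]
      exact Finset.sum_congr rfl fun i _ => intervalIntegral.integral_const_mul _ _
    have h7 : (∑ i : Fin n, (1 / (n:ℝ)) * ∫ t in (0:ℝ)..1, ‖Dker W ((x i : ℝ) * t)‖ ^ n)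
        = ∫ t in (0:ℝ)..1, ‖Dker W t‖ ^ n := by
      rw [Finset.sum_congr rfl fun i _ => by rw [scale_int W n (x i) (hx i).1]]
      rw [Finset.sum_const, Finset.card_univ, Fintype.card_fin, nsmul_eq_mul]
      have hn0 : ((n:ℝ)) ≠ 0 := by positivity
      field_simp
    have h8 := Kbound W n hW hn2'
    have hgoal : 3 / (Real.sqrt n * (W : ℝ)) * (2 * (W : ℝ) + 1) ^ n
        = 3 * (2 * (W : ℝ) + 1) ^ n / (Real.sqrt n * W) := by ring
    rw [hgoal]
    calc ((((Fintype.piFinset fun _ : Fin n => Finset.Icc (-(W : ℤ)) W).filter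
          fun a => ∑ i, a i * x i = 0).card : ℕ) : ℝ)
        = ‖((((Fintype.piFinset fun _ : Fin n => Finset.Icc (-(W : ℤ)) W).filter
          fun a => ∑ i, a i * x i = 0).card : ℕ) : ℂ)‖ := hnormN
      _ ≤ ∫ t in (0:ℝ)..1, ‖∏ i, Dker W ((x i : ℝ) * t)‖ := h2
      _ = ∫ t in (0:ℝ)..1, ∏ i, ‖Dker W ((x i : ℝ) * t)‖ := h3
      _ ≤ ∫ t in (0:ℝ)..1, ∑ i, (1 / (n:ℝ)) * ‖Dker W ((x i : ℝ) * t)‖ ^ n := h4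
      _ = ∑ i, (1 / (n:ℝ)) * ∫ t in (0:ℝ)..1, ‖Dker W ((x i : ℝ) * t)‖ ^ n := h5
      _ = ∫ t in (0:ℝ)..1, ‖Dker W t‖ ^ n := h7
      _ ≤ 3 * (2 * (W : ℝ) + 1) ^ n / (Real.sqrt n * W) := h8
end

section
/- Let A_k be the recursive EQ matrix construction starting from A₀ = [1], and suppose A_k x = z for some x ∈ {0,1}^{n_k}. Write z = (z⁽¹⁾, z⁽²⁾) and x = (x⁽¹⁾, x⁽²⁾, x⁽³⁾) according to the block structure A_k = [[A_{k-1}, A_{k-1}, I],[A_{k-1}, -A_{k-1}, 0]]. Then x⁽³⁾ = (z⁽¹⁾ + z⁽²⁾) mod 2 (entrywise), A_{k-1}x⁽¹⁾ = (z⁽¹⁾ + z⁽²⁾ - x⁽³⁾)/2, and A_{k-1}x⁽²⁾ = (z⁽¹⁾ - z⁽²⁾ - x⁽³⁾)/2. -/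
/-!
Adding the two block equations gives `2 A x⁽¹⁾ + x⁽³⁾ = z⁽¹⁾ + z⁽²⁾`; since `x⁽³⁾` is a
0/1 vector, reducing mod 2 recovers `x⁽³⁾`, and then halving recovers `A x⁽¹⁾`, and
likewise `A x⁽²⁾` from the difference `2 A x⁽²⁾ + x⁽³⁾ = z⁽¹⁾ - z⁽²⁾`.
-/

open Matrix

namespace Matrix

variable {m n R : Type*} [Fintype m] [Fintype n] [DecidableEq m] [Ring R]

/-- The recursive step `A ↦ [[A, A, I], [A, -A, 0]]` of the EQ matrix construction. -/
def eqStep (A : Matrix m n R) : Matrix (m ⊕ m) ((n ⊕ n) ⊕ m) R :=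
  fromBlocks (fromCols A A) 1 (fromCols A (-A)) 0

theorem eqStep_mulVec_inl (A : Matrix m n R) (x : (n ⊕ n) ⊕ m → R) (t : m) :
    (eqStep A *ᵥ x) (Sum.inl t) =
      (A *ᵥ fun j => x (Sum.inl (Sum.inl j))) t + (A *ᵥ fun j => x (Sum.inl (Sum.inr j))) t
        + x (Sum.inr t) := by
  simp [eqStep, fromBlocks_mulVec, Function.comp_def]

theorem eqStep_mulVec_inr (A : Matrix m n R) (x : (n ⊕ n) ⊕ m → R) (t : m) :
    (eqStep A *ᵥ x) (Sum.inr t) =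
      (A *ᵥ fun j => x (Sum.inl (Sum.inl j))) t - (A *ᵥ fun j => x (Sum.inl (Sum.inr j))) t := by
  simp [eqStep, fromBlocks_mulVec, neg_mulVec, sub_eq_add_neg, Function.comp_def]

end Matrix

theorem Int.eq_emod_two_and_eq_div_two_of_add_of_sub {a b e u v : ℤ} (he : e = 0 ∨ e = 1)
    (hu : u = a + b + e) (hv : v = a - b) :
    e = (u + v) % 2 ∧ a = (u + v - e) / 2 ∧ b = (u - v - e) / 2 := by
  omega

/-- Decoding step for the recursive construction: if
`A_k = [[A, A, I], [A, -A, 0]]` and `A_k x = z` with `x ∈ {0,1}`-valued, writing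
`x = (x⁽¹⁾, x⁽²⁾, x⁽³⁾)` and `z = (z⁽¹⁾, z⁽²⁾)`, then `x⁽³⁾ = (z⁽¹⁾ + z⁽²⁾) mod 2`,
`A x⁽¹⁾ = (z⁽¹⁾ + z⁽²⁾ - x⁽³⁾)/2` and `A x⁽²⁾ = (z⁽¹⁾ - z⁽²⁾ - x⁽³⁾)/2`. -/
theorem stmt_19 (m n : ℕ) (A : Matrix (Fin m) (Fin n) ℤ)
    (Ak : Matrix (Fin m ⊕ Fin m) ((Fin n ⊕ Fin n) ⊕ Fin m) ℤ)
    (hAk : Ak = Matrix.fromBlocks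
      (Matrix.of fun i j => Sum.elim (A i) (A i) j) (1 : Matrix (Fin m) (Fin m) ℤ)
      (Matrix.of fun i j => Sum.elim (A i) (-(A i)) j) (0 : Matrix (Fin m) (Fin m) ℤ))
    (x : (Fin n ⊕ Fin n) ⊕ Fin m → ℤ) (hx : ∀ j, x j ∈ ({0, 1} : Set ℤ))
    (z : Fin m ⊕ Fin m → ℤ) (hz : Ak.mulVec x = z) :
    (∀ t, x (Sum.inr t) = (z (Sum.inl t) + z (Sum.inr t)) % 2) ∧
    (∀ t, A.mulVec (fun j => x (Sum.inl (Sum.inl j))) t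
        = (z (Sum.inl t) + z (Sum.inr t) - x (Sum.inr t)) / 2) ∧
    (∀ t, A.mulVec (fun j => x (Sum.inl (Sum.inr j))) t
        = (z (Sum.inl t) - z (Sum.inr t) - x (Sum.inr t)) / 2) := by
  have hAk : Ak = eqStep A := hAk
  subst hz hAk
  have hdecode t := Int.eq_emod_two_and_eq_div_two_of_add_of_sub (hx (Sum.inr t))
    (eqStep_mulVec_inl A x t) (eqStep_mulVec_inr A x t)
  exact ⟨fun t => (hdecode t).1, fun t => (hdecode t).2.1, fun t => (hdecode t).2.2⟩
end
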